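/- arXiv:0810.4907 — 3 statements merged into one kernel-verified Lean document; each statement's English description precedes it below -/
import Mathlib

section
/- (Easy direction of extended Kapranov.) Let f̃ ∈ K[x₁,…,x_n] be a polynomial over the field K of Puiseux series, and let b̃ = (b̃₁,…,b̃_n) ∈ (K*)ⁿ be a root of f̃. Set b_j = o(b̃_j) and γ_j = pc(b̃_j). Then b = (b₁,…,b_n) lies in the tropical hypersurface 𝒯(f), and the initial form f̃_b satisfies f̃_b(γ₁,…,γ_n) = 0. -/
noncomputable section

/-- The field of (generalized) Puiseux series over `ℂ`, modeled as Hahn series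
with value group `ℚ` and coefficients in `ℂ`. -/
abbrev K : Type := HahnSeries ℚ ℂ

/-- The principal coefficient of a Puiseux series. -/
def pc (a : K) : ℂ := a.coeff a.order

/-- The weight of the multi-index `i` of `f` at the point `b`:
`o(a_i) + i·b`. -/
def wt {n : ℕ} (f : MvPolynomial (Fin n) K) (b : Fin n → ℚ) (i : Fin n →₀ ℕ) : ℚ :=
  (f.coeff i).order + ∑ j, (i j : ℚ) * b j

/-- The tropicalization `f(b) = min_{i ∈ supp f} (o(a_i) + i·b)`, with value `⊤`
for the zero polynomial. -/
def trop {n : ℕ} (f : MvPolynomial (Fin n) K) (b : Fin n → ℚ) : WithTop ℚ :=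
  f.support.inf fun i => (wt f b i : WithTop ℚ)

/-- The tropical hypersurface `𝒯(f)`: points where the minimum is attained at
least twice. -/
def tropSet {n : ℕ} (f : MvPolynomial (Fin n) K) : Set (Fin n → ℚ) :=
  {b | ∃ i ∈ f.support, ∃ j ∈ f.support, i ≠ j ∧
    (wt f b i : WithTop ℚ) = trop f b ∧ (wt f b j : WithTop ℚ) = trop f b}

/-- The initial form `f̃_b ∈ ℂ[x]` of `f` at `b`. -/
def initForm {n : ℕ} (f : MvPolynomial (Fin n) K) (b : Fin n → ℚ) :
    MvPolynomial (Fin n) ℂ :=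
  ∑ i ∈ f.support.filter fun i => (wt f b i : WithTop ℚ) = trop f b,
    MvPolynomial.monomial i (pc (f.coeff i))

/-!
Write the root equation as `∑ᵢ aᵢ xⁱ = 0`. The term `aᵢ xⁱ` has order `o(aᵢ) + i·b` and
leading coefficient `pc(aᵢ) γⁱ`, so the coefficient of `t^m` in the sum, for `m = f(b)` the
minimal order, is the sum of the leading coefficients of the terms of minimal order, that is
`f̃_b(γ)`. It vanishes because the sum does. If the minimum were attained only once, this
coefficient would be a single nonzero leading coefficient.
-/

open MvPolynomial

namespace HahnSeries

variable {Γ R ι : Type*}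

theorem coeff_sum_eq_sum_leadingCoeff [LinearOrder Γ] [Zero Γ] [AddCommMonoid R]
    (s : Finset ι) (T : ι → HahnSeries Γ R) {m : Γ} (hm : ∀ i ∈ s, m ≤ (T i).order) :
    (∑ i ∈ s, T i).coeff m = ∑ i ∈ s with (T i).order = m, (T i).leadingCoeff := by
  rw [coeff_sum, Finset.sum_filter]
  refine Finset.sum_congr rfl fun i hi => ?_
  split_ifs with h
  · rw [leadingCoeff_eq, h]
  · exact coeff_eq_zero_of_lt_order ((hm i hi).lt_of_ne' h)

variable [AddCommMonoid Γ] [LinearOrder Γ] [IsOrderedCancelAddMonoid Γ]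

theorem order_prod [CommSemiring R] [NoZeroDivisors R] [Nontrivial R] (s : Finset ι)
    {g : ι → HahnSeries Γ R} (hg : ∀ i ∈ s, g i ≠ 0) :
    (∏ i ∈ s, g i).order = ∑ i ∈ s, (g i).order := by
  induction s using Finset.cons_induction with
  | empty => simp
  | cons a s has ih =>
    rw [Finset.forall_mem_cons] at hg
    rw [Finset.prod_cons, Finset.sum_cons, order_mul hg.1 (Finset.prod_ne_zero_iff.2 hg.2),
      ih hg.2]

@[simps]
def leadingCoeffHom [Semiring R] [NoZeroDivisors R] : HahnSeries Γ R →* R where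
  toFun := leadingCoeff
  map_one' := leadingCoeff_one
  map_mul' x y := leadingCoeff_mul x y

end HahnSeries

theorem pc_eq_leadingCoeff (a : K) : pc a = a.leadingCoeff :=
  HahnSeries.leadingCoeff_eq.symm

section Terms

variable {n : ℕ} {f : MvPolynomial (Fin n) K} {x : Fin n → K}

theorem order_coeff_mul_prod_pow (hx : ∀ j, x j ≠ 0) {i : Fin n →₀ ℕ} (hi : i ∈ f.support) :
    (f.coeff i * ∏ j, x j ^ i j).order = wt f (fun j => (x j).order) i := by
  have hpow : ∀ j ∈ Finset.univ, x j ^ i j ≠ 0 := fun j _ => pow_ne_zero _ (hx j)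
  rw [HahnSeries.order_mul (mem_support_iff.1 hi) (Finset.prod_ne_zero_iff.2 hpow),
    HahnSeries.order_prod _ hpow, wt]
  simp [nsmul_eq_mul]

theorem leadingCoeff_coeff_mul_prod_pow (i : Fin n →₀ ℕ) :
    (f.coeff i * ∏ j, x j ^ i j).leadingCoeff =
      eval (fun j => pc (x j)) (monomial i (pc (f.coeff i))) := by
  simp only [eval_monomial, Finsupp.prod_pow, pc_eq_leadingCoeff,
    ← HahnSeries.leadingCoeffHom_apply, map_mul, map_prod, map_pow]

theorem eval_pc_initForm (hx : ∀ j, x j ≠ 0) {m : ℚ}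
    (hm : trop f (fun j => (x j).order) = m) :
    eval (fun j => pc (x j)) (initForm f fun j => (x j).order) = (eval x f).coeff m := by
  have hle : ∀ i ∈ f.support, m ≤ (f.coeff i * ∏ j, x j ^ i j).order := fun i hi => by
    rw [order_coeff_mul_prod_pow hx hi, ← WithTop.coe_le_coe, ← hm]
    exact Finset.inf_le hi
  rw [eval_eq' x f, HahnSeries.coeff_sum_eq_sum_leadingCoeff _ _ hle, initForm, map_sum]
  refine Finset.sum_congr (Finset.filter_congr fun i hi => ?_)
    fun i _ => (leadingCoeff_coeff_mul_prod_pow i).symm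
  rw [hm, order_coeff_mul_prod_pow hx hi, WithTop.coe_inj]

end Terms

theorem initForm_eq_monomial_of_notMem_tropSet {n : ℕ} {f : MvPolynomial (Fin n) K}
    {b : Fin n → ℚ} {i : Fin n →₀ ℕ} (hi : i ∈ f.support) (hmin : trop f b = wt f b i)
    (hb : b ∉ tropSet f) : initForm f b = monomial i (pc (f.coeff i)) := by
  have hfilter : {k ∈ f.support | (wt f b k : WithTop ℚ) = trop f b} = {i} := by
    refine Finset.eq_singleton_iff_unique_mem.2 ⟨Finset.mem_filter.2 ⟨hi, hmin.symm⟩, ?_⟩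
    intro k hk
    by_contra hki
    obtain ⟨hk, hkmin⟩ := Finset.mem_filter.1 hk
    exact hb ⟨k, hk, i, hi, hki, hkmin, hmin.symm⟩
  rw [initForm, hfilter, Finset.sum_singleton]

/-- Easy direction of extended Kapranov: if `x ∈ (K*)ⁿ` is a root of the
nonzero polynomial `f`, then the vector of orders `b` lies in the tropical
hypersurface `𝒯(f)` and the vector of principal coefficients is a root of the
initial form `f̃_b`. -/
theorem kapranov_easy_direction (n : ℕ) (f : MvPolynomial (Fin n) K)
    (hf : f ≠ 0) (x : Fin n → K) (hx : ∀ j, x j ≠ 0)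
    (hroot : MvPolynomial.eval x f = 0) :
    (fun j => (x j).order) ∈ tropSet f ∧
      MvPolynomial.eval (fun j => pc (x j))
        (initForm f fun j => (x j).order) = 0 := by
  set b : Fin n → ℚ := fun j => (x j).order
  obtain ⟨i, hi, hmin⟩ := Finset.exists_mem_eq_inf f.support (support_nonempty.2 hf)
    fun i => (wt f b i : WithTop ℚ)
  have hinit : eval (fun j => pc (x j)) (initForm f b) = 0 := by
    rw [eval_pc_initForm hx hmin, hroot, HahnSeries.coeff_zero]
  refine ⟨?_, hinit⟩
  by_contra hb
  rw [initForm_eq_monomial_of_notMem_tropSet hi hmin hb, ← leadingCoeff_coeff_mul_prod_pow,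
    HahnSeries.leadingCoeff_eq_zero] at hinit
  exact mul_ne_zero (mem_support_iff.1 hi)
    (Finset.prod_ne_zero_iff.2 fun j _ => pow_ne_zero _ (hx j)) hinit
end
end

section
/- (Extended Kapranov theorem / multivariate Newton–Puiseux lifting.) Let f̃ = Σ_{i∈I} ã_i x^i ∈ K[x₁,…,x_n] be a polynomial over the field K of Puiseux series over ℂ. Given γ = (γ₁,…,γ_n) ∈ (ℂ*)ⁿ and b = (b₁,…,b_n) ∈ ℚⁿ, there exists a point b̃ = (b̃₁,…,b̃_n) ∈ (K*)ⁿ with f̃(b̃) = 0, o(b̃_j) = b_j and pc(b̃_j) = γ_j for all j, if and only if b ∈ 𝒯(f) and f̃_b(γ₁,…,γ_n) = 0. -/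
noncomputable section

/-!
If `x` is a root with `o(x) = b` and `pc(x) = γ`, then the coefficient of `t ^ trop f b` in
`f(x)` is `f̃_b(γ)`, so `f̃_b(γ) = 0`; as `γ` has no zero coordinate, `f̃_b` is not a monomial,
i.e. the minimum defining `trop f b` is attained twice.

Conversely we run Newton's method transfinitely. For an approximation `x` with `f(x) ≠ 0`, let
`e = critExp f b x` be the least `e` for which no term of `f(x + X) - f(x)` has smaller weight at
`b + e` than `f(x)`. The initial form of `f(x + X)` at `b + e` then has the constant term
`pc (f x)` and a nonconstant term, hence a complex zero `d` (Nullstellensatz), and moving `x` by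
`d t^(b + e)` strictly raises the order of `f`. The exponent `critExp` cannot drop along such
steps, so the balls `o(y - x) ≥ b + critExp f b x` are nested; Hahn series being spherically
complete, every chain of steps has an upper bound, and Zorn's lemma yields a root. Starting
from `x₀ = γ t^b`, the hypothesis `f̃_b(γ) = 0` gives `critExp f b x₀ > 0`, so the root still has
order `b` and principal coefficient `γ`.
-/

open MvPolynomial

theorem MvPolynomial.exists_eval_eq_zero {k σ : Type*} [Field k] [IsAlgClosed k] [Finite σ]
    {P : MvPolynomial σ k} (hP : P.totalDegree ≠ 0) : ∃ x, eval x P = 0 := by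
  by_contra! h
  have hempty : zeroLocus k (Ideal.span {P}) = ∅ :=
    Set.eq_empty_of_forall_notMem fun x hx => h x (hx P (Ideal.subset_span rfl))
  have hunit : IsUnit P := by
    rw [← Ideal.span_singleton_eq_top, ← Ideal.radical_eq_top,
      ← vanishingIdeal_zeroLocus_eq_radical (K := k), hempty, vanishingIdeal_empty]
  obtain ⟨r, -, rfl⟩ := isUnit_iff_eq_C_of_isReduced.1 hunit
  exact hP (totalDegree_C r)

theorem MvPolynomial.totalDegree_ne_zero_of_mem_support {σ R : Type*} [CommSemiring R]
    {P : MvPolynomial σ R} {N : σ →₀ ℕ} (hN : N ∈ P.support) (hN0 : N ≠ 0) :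
    P.totalDegree ≠ 0 :=
  fun h => hN0 (Finsupp.ext ((totalDegree_eq_zero_iff _ P).1 h N hN))

namespace HahnSeries

section OrderedMonoid

variable {Γ R ι : Type*} [AddCommMonoid Γ] [LinearOrder Γ] [IsOrderedCancelAddMonoid Γ]

theorem le_orderTop_sum_add [AddCommMonoid R] (t : Finset ι) (F : ι → HahnSeries Γ R)
    {v w : WithTop Γ} (h : ∀ i ∈ t, v ≤ (F i).orderTop + w) :
    v ≤ (∑ i ∈ t, F i).orderTop + w := by
  classical
  induction t using Finset.induction_on with
  | empty => simp
  | insert i t hi ih =>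
    rw [Finset.sum_insert hi]
    calc v ≤ min ((F i).orderTop + w) ((∑ k ∈ t, F k).orderTop + w) :=
          le_min (h i (Finset.mem_insert_self i t))
            (ih fun k hk => h k (Finset.mem_insert_of_mem hk))
      _ = min (F i).orderTop (∑ k ∈ t, F k).orderTop + w := min_add_add_right ..
      _ ≤ _ := by gcongr; exact min_orderTop_le_orderTop_add

theorem coeff_mul_of_le_orderTop [NonUnitalNonAssocSemiring R] {x y : HahnSeries Γ R} {a b : Γ}
    (ha : ↑a ≤ x.orderTop) (hb : ↑b ≤ y.orderTop) : (x * y).coeff (a + b) = x.coeff a * y.coeff b := by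
  rw [coeff_mul, Finset.sum_eq_single (a, b)]
  · rintro ⟨c, d⟩ hcd hne
    simp only [Finset.mem_antidiagonal, mem_support] at hcd
    obtain ⟨hc, hd, hsum⟩ := hcd
    have hac : a ≤ c := WithTop.coe_le_coe.1 (ha.trans (orderTop_le_of_coeff_ne_zero hc))
    have hbd : b ≤ d := WithTop.coe_le_coe.1 (hb.trans (orderTop_le_of_coeff_ne_zero hd))
    have : a = c ∧ b = d := by
      constructor <;> by_contra h
      · exact (add_lt_add_of_lt_of_le (lt_of_le_of_ne hac h) hbd).ne' hsum
      · exact (add_lt_add_of_le_of_lt hac (lt_of_le_of_ne hbd h)).ne' hsum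
    exact absurd (by rw [this.1, this.2]) hne
  · intro h
    simp only [Finset.mem_antidiagonal, mem_support, and_true, not_and_or, not_not] at h
    rcases h with h | h <;> simp [h]

variable [CommSemiring R]

theorem sum_le_orderTop_prod (t : Finset ι) (F : ι → HahnSeries Γ R) (a : ι → Γ)
    (h : ∀ i ∈ t, ↑(a i) ≤ (F i).orderTop) : ↑(∑ i ∈ t, a i) ≤ (∏ i ∈ t, F i).orderTop := by
  classical
  induction t using Finset.induction_on with
  | empty => simpa using orderTop_single_le (a := (0 : Γ)) (r := (1 : R))
  | insert i t hi ih =>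
    rw [Finset.sum_insert hi, Finset.prod_insert hi, WithTop.coe_add]
    exact (add_le_add (h i (Finset.mem_insert_self i t))
      (ih fun k hk => h k (Finset.mem_insert_of_mem hk))).trans orderTop_add_le_mul

theorem coeff_prod_of_le_orderTop (t : Finset ι) (F : ι → HahnSeries Γ R) (a : ι → Γ)
    (h : ∀ i ∈ t, ↑(a i) ≤ (F i).orderTop) :
    (∏ i ∈ t, F i).coeff (∑ i ∈ t, a i) = ∏ i ∈ t, (F i).coeff (a i) := by
  classical
  induction t using Finset.induction_on with
  | empty => simp [coeff_one]
  | insert i t hi ih =>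
    have ht : ∀ k ∈ t, ↑(a k) ≤ (F k).orderTop := fun k hk => h k (Finset.mem_insert_of_mem hk)
    rw [Finset.sum_insert hi, Finset.prod_insert hi, Finset.prod_insert hi,
      coeff_mul_of_le_orderTop (h i (Finset.mem_insert_self i t)) (sum_le_orderTop_prod t F a ht),
      ih ht]

theorem nsmul_le_orderTop_pow {x : HahnSeries Γ R} {a : Γ} (h : ↑a ≤ x.orderTop) (k : ℕ) :
    ↑(k • a) ≤ (x ^ k).orderTop := by
  rw [WithTop.coe_nsmul]
  exact (nsmul_le_nsmul_right h k).trans orderTop_nsmul_le_orderTop_pow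

theorem coeff_pow_of_le_orderTop {x : HahnSeries Γ R} {a : Γ} (h : ↑a ≤ x.orderTop) (k : ℕ) :
    (x ^ k).coeff (k • a) = x.coeff a ^ k := by
  simpa using coeff_prod_of_le_orderTop (Finset.range k) (fun _ => x) (fun _ => a) fun _ _ => h

end OrderedMonoid

theorem exists_forall_le_orderTop_sub {Γ R ι : Type*} [LinearOrder Γ] [AddGroup R]
    (s : ι → HahnSeries Γ R) (ρ : ι → Γ)
    (h : ∀ i i', ((min (ρ i) (ρ i') : Γ) : WithTop Γ) ≤ (s i - s i').orderTop) :
    ∃ u : HahnSeries Γ R, ∀ i, (ρ i : WithTop Γ) ≤ (u - s i).orderTop := by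
  classical
  have hagree : ∀ i i' q, q < ρ i → q < ρ i' → (s i).coeff q = (s i').coeff q := by
    intro i i' q hq hq'
    have := le_orderTop_iff_forall.1 (h i i') q (WithTop.coe_lt_coe.2 (lt_min hq hq'))
    rwa [coeff_sub, sub_eq_zero] at this
  set F : Γ → R := fun q => if hq : ∃ i, q < ρ i then (s hq.choose).coeff q else 0
  have hF : ∀ i q, q < ρ i → F q = (s i).coeff q := fun i q hq => by
    simp only [F, dif_pos (⟨i, hq⟩ : ∃ i, q < ρ i)]
    exact hagree _ i q (Exists.choose_spec (⟨i, hq⟩ : ∃ i, q < ρ i)) hq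
  have hwf : (Function.support F).IsWF := by
    rw [Set.isWF_iff_no_descending_seq]
    intro g hg hmem
    obtain ⟨i, hi⟩ : ∃ i, g 0 < ρ i := by
      by_contra hno
      exact hmem 0 (by simp only [F, dif_neg hno])
    refine Set.isWF_iff_no_descending_seq.1 (s i).isWF_support g hg fun m => ?_
    rw [mem_support, ← hF i (g m) ((hg.antitone (Nat.zero_le m)).trans_lt hi)]
    exact hmem m
  refine ⟨⟨F, hwf.isPWO⟩, fun i => le_orderTop_iff_forall.2 fun q hq => ?_⟩
  rw [coeff_sub, sub_eq_zero]
  exact hF i q (WithTop.coe_lt_coe.1 hq)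

end HahnSeries

namespace MvPolynomial

variable {σ R : Type*} [CommSemiring R]

def taylor (x : σ → R) : MvPolynomial σ R →ₐ[R] MvPolynomial σ R :=
  aeval fun j => C (x j) + X j

theorem eval_taylor (x y : σ → R) (P : MvPolynomial σ R) :
    eval y (taylor x P) = eval (x + y) P := by
  induction P using MvPolynomial.induction_on <;> simp_all [taylor]

theorem taylor_taylor (x y : σ → R) (P : MvPolynomial σ R) :
    taylor y (taylor x P) = taylor (x + y) P := by
  induction P using MvPolynomial.induction_on <;> simp_all [taylor, add_assoc]

theorem taylor_zero (P : MvPolynomial σ R) : taylor 0 P = P := by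
  induction P using MvPolynomial.induction_on <;> simp_all [taylor]

theorem taylor_C (x : σ → R) (c : R) : taylor x (C c) = C c := by
  rw [taylor, aeval_C, algebraMap_eq]

theorem constantCoeff_taylor (x : σ → R) (P : MvPolynomial σ R) :
    constantCoeff (taylor x P) = eval x P := by
  rw [← eval_zero, eval_taylor, add_zero]

end MvPolynomial

section Trop

variable {n : ℕ}

theorem pc_zero : pc 0 = 0 := by simp [pc]

theorem pc_ne_zero {a : K} (ha : a ≠ 0) : pc a ≠ 0 := by
  rw [pc, ← HahnSeries.leadingCoeff_eq]
  exact HahnSeries.leadingCoeff_ne_zero.2 ha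

theorem wt_eq_order_add_weight (P : MvPolynomial (Fin n) K) (s : Fin n → ℚ) (N : Fin n →₀ ℕ) :
    wt P s N = (P.coeff N).order + N.weight s := by
  simp [wt, Finsupp.weight_eq_sum, nsmul_eq_mul]

theorem coe_wt_of_mem_support (P : MvPolynomial (Fin n) K) (s : Fin n → ℚ) {N : Fin n →₀ ℕ}
    (hN : N ∈ P.support) : (wt P s N : WithTop ℚ) = (P.coeff N).orderTop + ↑(N.weight s) := by
  rw [wt_eq_order_add_weight, WithTop.coe_add,
    HahnSeries.order_eq_orderTop_of_ne_zero (mem_support_iff.1 hN)]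

theorem le_trop_iff {P : MvPolynomial (Fin n) K} {s : Fin n → ℚ} {v : WithTop ℚ} :
    v ≤ trop P s ↔ ∀ N, v ≤ (P.coeff N).orderTop + ↑(N.weight s) := by
  rw [trop, Finset.le_inf_iff]
  refine forall_congr' fun N => ?_
  by_cases hN : N ∈ P.support
  · simp [hN, coe_wt_of_mem_support P s hN]
  · simp [hN, notMem_support_iff.1 hN]

theorem lt_trop_iff {P : MvPolynomial (Fin n) K} {s : Fin n → ℚ} {v : WithTop ℚ} (hv : v ≠ ⊤) :
    v < trop P s ↔ ∀ N, v < (P.coeff N).orderTop + ↑(N.weight s) := by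
  rw [trop, Finset.lt_inf_iff (lt_top_iff_ne_top.2 hv)]
  refine forall_congr' fun N => ?_
  by_cases hN : N ∈ P.support
  · simp [hN, coe_wt_of_mem_support P s hN]
  · simp [hN, notMem_support_iff.1 hN, lt_top_iff_ne_top.2 hv]

theorem trop_le (P : MvPolynomial (Fin n) K) (s : Fin n → ℚ) (N : Fin n →₀ ℕ) :
    trop P s ≤ (P.coeff N).orderTop + ↑(N.weight s) :=
  le_trop_iff.1 le_rfl N

theorem trop_le_constantCoeff (P : MvPolynomial (Fin n) K) (s : Fin n → ℚ) :
    trop P s ≤ (constantCoeff P).orderTop := by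
  simpa [constantCoeff_eq] using trop_le P s 0

theorem trop_ne_top {P : MvPolynomial (Fin n) K} (hP : P ≠ 0) (s : Fin n → ℚ) :
    trop P s ≠ ⊤ := by
  obtain ⟨i, -, hi⟩ := Finset.exists_mem_eq_inf P.support (support_nonempty.2 hP)
    fun N => (wt P s N : WithTop ℚ)
  rw [trop, hi]
  exact WithTop.coe_ne_top

theorem min_trop_le_trop_add (P Q : MvPolynomial (Fin n) K) (s : Fin n → ℚ) :
    min (trop P s) (trop Q s) ≤ trop (P + Q) s :=
  le_trop_iff.2 fun N => by
    rw [coeff_add]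
    calc min (trop P s) (trop Q s)
        ≤ min ((P.coeff N).orderTop + ↑(N.weight s)) ((Q.coeff N).orderTop + ↑(N.weight s)) :=
          min_le_min (trop_le P s N) (trop_le Q s N)
      _ = min (P.coeff N).orderTop (Q.coeff N).orderTop + ↑(N.weight s) := min_add_add_right ..
      _ ≤ _ := by gcongr; exact HahnSeries.min_orderTop_le_orderTop_add

theorem trop_add_trop_le_trop_mul (P Q : MvPolynomial (Fin n) K) (s : Fin n → ℚ) :
    trop P s + trop Q s ≤ trop (P * Q) s := by
  refine le_trop_iff.2 fun N => ?_
  rw [coeff_mul]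
  refine HahnSeries.le_orderTop_sum_add _ _ fun A hA => ?_
  rw [Finset.HasAntidiagonal.mem_antidiagonal] at hA
  rw [HahnSeries.orderTop_mul, ← hA, map_add, WithTop.coe_add, add_add_add_comm]
  exact add_le_add (trop_le P s A.1) (trop_le Q s A.2)

theorem orderTop_le_trop_C (c : K) (s : Fin n → ℚ) : c.orderTop ≤ trop (C c) s :=
  le_trop_iff.2 fun N => by
    rw [coeff_C]
    split_ifs with h
    · simp [← h]
    · simp

theorem le_trop_X (j : Fin n) (s : Fin n → ℚ) : (s j : WithTop ℚ) ≤ trop (X j) s :=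
  le_trop_iff.2 fun N => by
    classical
    rw [coeff_X]
    split_ifs with h
    · simp [← h, Finsupp.weight_single, HahnSeries.orderTop_one]
    · simp

theorem le_trop_sum {ι : Type*} (t : Finset ι) (F : ι → MvPolynomial (Fin n) K)
    (s : Fin n → ℚ) {v : WithTop ℚ} (h : ∀ i ∈ t, v ≤ trop (F i) s) :
    v ≤ trop (∑ i ∈ t, F i) s := by
  classical
  induction t using Finset.induction_on with
  | empty => simp [trop]
  | insert i t hi ih =>
    rw [Finset.sum_insert hi]
    exact (le_min (h i (Finset.mem_insert_self i t))
      (ih fun k hk => h k (Finset.mem_insert_of_mem hk))).trans (min_trop_le_trop_add _ _ s)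

theorem nsmul_trop_le_trop_pow (P : MvPolynomial (Fin n) K) (s : Fin n → ℚ) (k : ℕ) :
    k • trop P s ≤ trop (P ^ k) s := by
  induction k with
  | zero => simpa [HahnSeries.orderTop_one] using orderTop_le_trop_C (1 : K) s
  | succ k ih =>
    rw [succ_nsmul, pow_succ]
    exact (add_le_add ih le_rfl).trans (trop_add_trop_le_trop_mul _ _ s)

theorem sum_trop_le_trop_prod {ι : Type*} (t : Finset ι) (F : ι → MvPolynomial (Fin n) K)
    (s : Fin n → ℚ) : ∑ i ∈ t, trop (F i) s ≤ trop (∏ i ∈ t, F i) s := by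
  classical
  induction t using Finset.induction_on with
  | empty => simpa [HahnSeries.orderTop_one] using orderTop_le_trop_C (1 : K) s
  | insert i t hi ih =>
    rw [Finset.sum_insert hi, Finset.prod_insert hi]
    exact (add_le_add le_rfl ih).trans (trop_add_trop_le_trop_mul _ _ s)

theorem trop_le_trop_aeval {g : Fin n → MvPolynomial (Fin n) K} {s s' : Fin n → ℚ}
    (hg : ∀ j, (s j : WithTop ℚ) ≤ trop (g j) s') (P : MvPolynomial (Fin n) K) :
    trop P s ≤ trop (aeval g P) s' := by
  conv_rhs => rw [P.as_sum, map_sum]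
  refine le_trop_sum _ _ _ fun N _ => ?_
  have hweight : (N.weight s : WithTop ℚ) ≤ trop (N.prod fun j k => g j ^ k) s' := by
    rw [Finsupp.weight_apply, Finsupp.sum, WithTop.coe_sum]
    refine le_trans (Finset.sum_le_sum fun j _ => ?_) (sum_trop_le_trop_prod _ _ _)
    rw [WithTop.coe_nsmul]
    exact (nsmul_le_nsmul_right (hg j) _).trans (nsmul_trop_le_trop_pow _ _ _)
  rw [aeval_monomial, algebraMap_eq]
  calc trop P s ≤ (P.coeff N).orderTop + N.weight s := trop_le P s N
    _ ≤ trop (C (P.coeff N)) s' + trop (N.prod fun j k => g j ^ k) s' :=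
        add_le_add (orderTop_le_trop_C _ s') hweight
    _ ≤ _ := trop_add_trop_le_trop_mul _ _ _

theorem trop_le_trop_taylor {s : Fin n → ℚ} {δ : Fin n → K}
    (hδ : ∀ j, (s j : WithTop ℚ) ≤ (δ j).orderTop) (P : MvPolynomial (Fin n) K) :
    trop P s ≤ trop (taylor δ P) s :=
  trop_le_trop_aeval (fun j => (le_min ((hδ j).trans (orderTop_le_trop_C _ s))
    (le_trop_X j s)).trans (min_trop_le_trop_add _ _ s)) P

end Trop

section InitialForm

variable {n : ℕ} {s : Fin n → ℚ} {x : Fin n → K}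

theorem trop_le_orderTop_eval (hx : ∀ j, (s j : WithTop ℚ) ≤ (x j).orderTop)
    (P : MvPolynomial (Fin n) K) : trop P s ≤ (eval x P).orderTop := by
  rw [← constantCoeff_taylor]
  exact (trop_le_trop_taylor hx P).trans (trop_le_constantCoeff _ s)

theorem weight_le_orderTop_prod_pow (hx : ∀ j, (s j : WithTop ℚ) ≤ (x j).orderTop)
    (N : Fin n →₀ ℕ) : ↑(N.weight s) ≤ (∏ j, x j ^ N j).orderTop := by
  rw [Finsupp.weight_eq_sum]
  exact HahnSeries.sum_le_orderTop_prod _ _ _ fun j _ =>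
    HahnSeries.nsmul_le_orderTop_pow (hx j) _

theorem coeff_prod_pow_weight (hx : ∀ j, (s j : WithTop ℚ) ≤ (x j).orderTop)
    (N : Fin n →₀ ℕ) :
    (∏ j, x j ^ N j).coeff (N.weight s) = ∏ j, (x j).coeff (s j) ^ N j := by
  rw [Finsupp.weight_eq_sum, HahnSeries.coeff_prod_of_le_orderTop _ _ _ fun j _ =>
    HahnSeries.nsmul_le_orderTop_pow (hx j) _]
  exact Finset.prod_congr rfl fun j _ => HahnSeries.coeff_pow_of_le_orderTop (hx j) _

theorem coeff_eval_eq_eval_initForm (hx : ∀ j, (s j : WithTop ℚ) ≤ (x j).orderTop)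
    {P : MvPolynomial (Fin n) K} {w : ℚ} (hw : trop P s = w) :
    (eval x P).coeff w = eval (fun j => (x j).coeff (s j)) (initForm P s) := by
  rw [eval_eq', HahnSeries.coeff_sum, initForm, map_sum, Finset.sum_filter]
  refine Finset.sum_congr rfl fun N hN => ?_
  have hord : ((P.coeff N).order : WithTop ℚ) ≤ (P.coeff N).orderTop :=
    (HahnSeries.order_eq_orderTop_of_ne_zero (mem_support_iff.1 hN)).le
  rw [eval_monomial, Finsupp.prod_pow]
  split_ifs with hN'
  · rw [hw, wt_eq_order_add_weight, WithTop.coe_eq_coe] at hN'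
    rw [← hN', HahnSeries.coeff_mul_of_le_orderTop hord (weight_le_orderTop_prod_pow hx N),
      coeff_prod_pow_weight hx, pc]
  · refine HahnSeries.coeff_eq_zero_of_lt_orderTop ?_
    calc (w : WithTop ℚ) < wt P s N := by
          rw [← hw]; exact lt_of_le_of_ne (Finset.inf_le hN) (Ne.symm hN')
      _ ≤ _ := by
          rw [wt_eq_order_add_weight, WithTop.coe_add]
          exact (add_le_add hord (weight_le_orderTop_prod_pow hx N)).trans
            HahnSeries.orderTop_add_le_mul

theorem trop_lt_orderTop_eval_single {P : MvPolynomial (Fin n) K} {d : Fin n → ℂ}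
    (hd : eval d (initForm P s) = 0) (hP : trop P s ≠ ⊤) :
    trop P s < (eval (fun j => HahnSeries.single (s j) (d j)) P).orderTop := by
  obtain ⟨v, hv⟩ := WithTop.ne_top_iff_exists.1 hP
  have hs : ∀ j, (s j : WithTop ℚ) ≤ (HahnSeries.single (s j) (d j)).orderTop :=
    fun j => HahnSeries.orderTop_single_le
  have hcoeff := coeff_eval_eq_eval_initForm hs hv.symm
  simp only [HahnSeries.coeff_single_same, hd] at hcoeff
  rw [← hv]
  exact lt_of_le_of_ne (hv ▸ trop_le_orderTop_eval hs P)
    (HahnSeries.orderTop_ne_of_coeff_eq_zero hcoeff).symm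

theorem coeff_initForm (P : MvPolynomial (Fin n) K) (s : Fin n → ℚ) (N : Fin n →₀ ℕ) :
    (initForm P s).coeff N = if (wt P s N : WithTop ℚ) = trop P s then pc (P.coeff N) else 0 := by
  classical
  rw [initForm, coeff_sum]
  simp only [coeff_monomial, Finset.sum_ite_eq', Finset.mem_filter, mem_support_iff]
  by_cases hN : P.coeff N = 0 <;> simp [hN, pc_zero]

theorem mem_tropSet_of_eval_initForm_eq_zero {P : MvPolynomial (Fin n) K} (hP : P ≠ 0)
    {d : Fin n → ℂ} (hd : ∀ j, d j ≠ 0) (h : eval d (initForm P s) = 0) : s ∈ tropSet P := by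
  obtain ⟨i, hi, hmin⟩ := Finset.exists_mem_eq_inf P.support (support_nonempty.2 hP)
    fun N => (wt P s N : WithTop ℚ)
  by_contra hs
  have hmonomial : initForm P s = monomial i (pc (P.coeff i)) := by
    ext N
    rw [coeff_initForm, coeff_monomial]
    by_cases hNi : i = N
    · subst hNi
      simp [trop, hmin]
    · rw [if_neg hNi, ite_eq_right_iff]
      intro hN
      by_contra hc
      exact hs ⟨i, hi, N, mem_support_iff.2 fun h0 => hc (by rw [h0, pc_zero]), hNi,
        hmin.symm, hN⟩
  rw [hmonomial, eval_monomial, Finsupp.prod_pow] at h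
  exact mul_ne_zero (pc_ne_zero (mem_support_iff.1 hi))
    (Finset.prod_ne_zero_iff.2 fun j _ => pow_ne_zero _ (hd j)) h

end InitialForm

section CriticalExponent

variable {n : ℕ} (f : MvPolynomial (Fin n) K) (b : Fin n → ℚ)

def taylorTail (x : Fin n → K) : MvPolynomial (Fin n) K := taylor x f - C (eval x f)

theorem coeff_taylorTail (x : Fin n → K) (N : Fin n →₀ ℕ) :
    (taylorTail f x).coeff N = if N = 0 then 0 else (taylor x f).coeff N := by
  split_ifs with hN
  · rw [taylorTail, coeff_sub, hN, coeff_zero_C, ← constantCoeff_eq, constantCoeff_taylor,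
      sub_self]
  · rw [taylorTail, coeff_sub, coeff_C, if_neg (Ne.symm hN), sub_zero]

theorem taylor_eq_taylorTail_add (x : Fin n → K) :
    taylor x f = taylorTail f x + C (eval x f) :=
  (sub_add_cancel _ _).symm

theorem taylorTail_ne_zero (hf : f.totalDegree ≠ 0) (x : Fin n → K) : taylorTail f x ≠ 0 := by
  intro h
  rw [taylorTail, sub_eq_zero] at h
  apply hf
  rw [← taylor_zero f, ← add_neg_cancel x, ← taylor_taylor, h, taylor_C, totalDegree_C]

theorem ne_zero_of_mem_support_taylorTail {x : Fin n → K} {N : Fin n →₀ ℕ}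
    (hN : N ∈ (taylorTail f x).support) : N ≠ 0 := by
  rintro rfl
  simp [coeff_taylorTail] at hN

theorem degree_pos_of_mem_support_taylorTail {x : Fin n → K} {N : Fin n →₀ ℕ}
    (hN : N ∈ (taylorTail f x).support) : (0 : ℚ) < N.degree := by
  exact_mod_cast Nat.pos_of_ne_zero
    ((Finsupp.degree_eq_zero_iff N).not.2 (ne_zero_of_mem_support_taylorTail f hN))

theorem wt_add_const (P : MvPolynomial (Fin n) K) (e : ℚ) (N : Fin n →₀ ℕ) :
    wt P (fun j => b j + e) N = wt P b N + N.degree * e := by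
  simp only [wt, Finsupp.degree_eq_sum, mul_add, Finset.sum_add_distrib, Nat.cast_sum,
    Finset.sum_mul, add_assoc]

/-- The slopes are chosen so that `critExp f b x` is the least `e` for which no term of
`f(x + X) - f(x)` has smaller weight at `b + e` than `f(x)` (`critExp_le_iff`). -/
def critExp (x : Fin n → K) : ℚ :=
  if h : (taylorTail f x).support.Nonempty then
    (taylorTail f x).support.sup' h fun N =>
      ((eval x f).order - wt (taylorTail f x) b N) / N.degree
  else 0

variable {f} {x y : Fin n → K} {e : ℚ}

theorem critExp_le_iff (hf : f.totalDegree ≠ 0) (hx : eval x f ≠ 0) :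
    critExp f b x ≤ e ↔ (eval x f).orderTop ≤ trop (taylorTail f x) (fun j => b j + e) := by
  rw [critExp, dif_pos (support_nonempty.2 (taylorTail_ne_zero f hf x)), Finset.sup'_le_iff,
    trop, Finset.le_inf_iff, ← HahnSeries.order_eq_orderTop_of_ne_zero hx]
  refine forall₂_congr fun N hN => ?_
  rw [div_le_iff₀ (degree_pos_of_mem_support_taylorTail f hN), wt_add_const,
    WithTop.coe_le_coe]
  constructor <;> intro h <;> linarith

theorem critExp_lt_iff (hf : f.totalDegree ≠ 0) (hx : eval x f ≠ 0) :
    critExp f b x < e ↔ (eval x f).orderTop < trop (taylorTail f x) (fun j => b j + e) := by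
  rw [critExp, dif_pos (support_nonempty.2 (taylorTail_ne_zero f hf x)), Finset.sup'_lt_iff,
    trop, ← HahnSeries.order_eq_orderTop_of_ne_zero hx, Finset.lt_inf_iff (WithTop.coe_lt_top _)]
  refine forall₂_congr fun N hN => ?_
  rw [div_lt_iff₀ (degree_pos_of_mem_support_taylorTail f hN), wt_add_const,
    WithTop.coe_lt_coe]
  constructor <;> intro h <;> linarith

theorem orderTop_eval_le_trop_taylor (hf : f.totalDegree ≠ 0) (hx : eval x f ≠ 0)
    (he : critExp f b x ≤ e) :
    (eval x f).orderTop ≤ trop (taylor x f) (fun j => b j + e) := by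
  rw [taylor_eq_taylorTail_add]
  exact (le_min ((critExp_le_iff b hf hx).1 he) (orderTop_le_trop_C _ _)).trans
    (min_trop_le_trop_add _ _ _)

theorem trop_taylor_critExp (hf : f.totalDegree ≠ 0) (hx : eval x f ≠ 0) :
    trop (taylor x f) (fun j => b j + critExp f b x) = (eval x f).orderTop :=
  le_antisymm (by simpa [constantCoeff_taylor] using trop_le_constantCoeff (taylor x f) _)
    (orderTop_eval_le_trop_taylor b hf hx le_rfl)

theorem orderTop_eval_le_of_critExp_le (hf : f.totalDegree ≠ 0) (hx : eval x f ≠ 0)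
    (hy : ∀ j, ((b j + critExp f b x : ℚ) : WithTop ℚ) ≤ (y j - x j).orderTop) :
    (eval x f).orderTop ≤ (eval y f).orderTop := by
  have h := trop_le_orderTop_eval (x := y - x) hy (taylor x f)
  rw [eval_taylor, add_sub_cancel] at h
  exact (orderTop_eval_le_trop_taylor b hf hx le_rfl).trans h

theorem zero_lt_critExp (hf : f.totalDegree ≠ 0) (hx : eval x f ≠ 0)
    (hxb : ∀ j, (b j : WithTop ℚ) ≤ (x j).orderTop) (hlt : trop f b < (eval x f).orderTop) :
    0 < critExp f b x := by
  by_contra! h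
  have hle := orderTop_eval_le_trop_taylor b hf hx h
  simp only [add_zero] at hle
  have hshift := trop_le_trop_taylor (δ := -x) (fun j => by simpa using hxb j) (taylor x f)
  rw [taylor_taylor, add_neg_cancel, taylor_zero] at hshift
  exact (hle.trans hshift).not_gt hlt

theorem totalDegree_initForm_taylor_ne_zero (hf : f.totalDegree ≠ 0) (hx : eval x f ≠ 0) :
    (initForm (taylor x f) (fun j => b j + critExp f b x)).totalDegree ≠ 0 := by
  set s := fun j => b j + critExp f b x
  obtain ⟨L, hL, hLmin⟩ := Finset.exists_mem_eq_inf (taylorTail f x).support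
    (support_nonempty.2 (taylorTail_ne_zero f hf x)) fun N => (wt (taylorTail f x) s N : WithTop ℚ)
  have htail : trop (taylorTail f x) s = (eval x f).orderTop :=
    le_antisymm (not_lt.1 fun h => lt_irrefl _ ((critExp_lt_iff b hf hx).2 h))
      ((critExp_le_iff b hf hx).1 le_rfl)
  have hL0 := ne_zero_of_mem_support_taylorTail f hL
  have hcoeff : (taylorTail f x).coeff L = (taylor x f).coeff L := by
    rw [coeff_taylorTail, if_neg hL0]
  have hwt : (wt (taylor x f) s L : WithTop ℚ) = trop (taylor x f) s := by
    rw [trop_taylor_critExp b hf hx, ← htail, trop, hLmin, wt, wt, hcoeff]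
  refine totalDegree_ne_zero_of_mem_support (N := L) ?_ hL0
  rw [mem_support_iff, coeff_initForm, if_pos hwt]
  exact pc_ne_zero (hcoeff ▸ mem_support_iff.1 hL)

end CriticalExponent

section NewtonStep

variable {n : ℕ} (f : MvPolynomial (Fin n) K) (b : Fin n → ℚ)

def IsNewtonStep (x y : Fin n → K) : Prop :=
  (eval x f).orderTop < (eval y f).orderTop ∧
    ∀ j, ((b j + critExp f b x : ℚ) : WithTop ℚ) ≤ (y j - x j).orderTop

theorem exists_isNewtonStep (hf : f.totalDegree ≠ 0) {x : Fin n → K} (hx : eval x f ≠ 0) :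
    ∃ y, IsNewtonStep f b x y := by
  obtain ⟨d, hd⟩ := exists_eval_eq_zero (totalDegree_initForm_taylor_ne_zero b hf hx)
  have hlt := trop_lt_orderTop_eval_single hd
    (by rw [trop_taylor_critExp b hf hx]; exact HahnSeries.orderTop_ne_top.2 hx)
  rw [trop_taylor_critExp b hf hx, eval_taylor] at hlt
  refine ⟨_, hlt, fun j => ?_⟩
  rw [Pi.add_apply, add_sub_cancel_left]
  exact HahnSeries.orderTop_single_le

variable {f b} {x y z : Fin n → K}

theorem IsNewtonStep.eval_ne_zero (h : IsNewtonStep f b x y) : eval x f ≠ 0 :=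
  HahnSeries.orderTop_ne_top.1 h.1.ne_top

theorem IsNewtonStep.critExp_le (hf : f.totalDegree ≠ 0) (hxy : IsNewtonStep f b x y)
    (hy : eval y f ≠ 0) : critExp f b x ≤ critExp f b y := by
  have hx := hxy.eval_ne_zero
  -- Otherwise, at weight `b + critExp f b x` every nonconstant term of `f(y + X)` beats `f(y)`;
  -- re-expanding at `x`, which lies in that ball, keeps this, against the minimality of `critExp`.
  by_contra! hlt
  have hyT := (critExp_lt_iff b hf hy).1 hlt
  have hδ : ∀ j, ((b j + critExp f b x : ℚ) : WithTop ℚ) ≤ ((x - y) j).orderTop := fun j => by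
    rw [Pi.sub_apply, ← neg_sub, HahnSeries.orderTop_neg]
    exact hxy.2 j
  have hshift : taylor x f = taylor (x - y) (taylorTail f y) + C (eval y f) := by
    conv_lhs => rw [← add_sub_cancel y x, ← taylor_taylor, taylor_eq_taylorTail_add f y]
    rw [map_add, taylor_C]
  refine lt_irrefl (critExp f b x) ((critExp_lt_iff b hf hx).2 ((lt_trop_iff
    (HahnSeries.orderTop_ne_top.2 hx)).2 fun N => ?_))
  by_cases hN : N = 0
  · simpa [coeff_taylorTail, hN] using hx
  · rw [coeff_taylorTail, if_neg hN, hshift, coeff_add, coeff_C, if_neg (Ne.symm hN), add_zero]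
    exact hxy.1.trans (hyT.trans_le ((trop_le_trop_taylor hδ _).trans (trop_le _ _ N)))

theorem IsNewtonStep.trans (hf : f.totalDegree ≠ 0) (hxy : IsNewtonStep f b x y)
    (hyz : IsNewtonStep f b y z) : IsNewtonStep f b x z := by
  refine ⟨hxy.1.trans hyz.1, fun j => ?_⟩
  have hexp := hxy.critExp_le hf hyz.eval_ne_zero
  rw [← sub_add_sub_cancel (z j) (y j) (x j)]
  refine le_trans (le_min (le_trans ?_ (hyz.2 j)) (hxy.2 j))
    HahnSeries.min_orderTop_le_orderTop_add
  exact_mod_cast add_le_add_right hexp (b j)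

open Relation

theorem IsChain.exists_upperBound_reflGen_isNewtonStep (hf : f.totalDegree ≠ 0)
    {c : Set (Fin n → K)} (hc : IsChain (ReflGen (IsNewtonStep f b)) c) :
    ∃ u, ∀ x ∈ c, ReflGen (IsNewtonStep f b) x u := by
  by_cases hmax : ∃ m ∈ c, ∀ x ∈ c, ReflGen (IsNewtonStep f b) x m
  · obtain ⟨m, -, hm⟩ := hmax
    exact ⟨m, hm⟩
  push Not at hmax
  have hsucc : ∀ x ∈ c, ∃ y ∈ c, IsNewtonStep f b x y := by
    intro x hx
    obtain ⟨y, hy, hyx⟩ := hmax x hx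
    rcases hc.total hx hy with (_ | hxy) | hyx'
    · exact absurd ReflGen.refl hyx
    · exact ⟨y, hy, hxy⟩
    · exact absurd hyx' hyx
  have hball : ∀ j, ∃ u : K, ∀ x : c,
      ((b j + critExp f b x : ℚ) : WithTop ℚ) ≤ (u - x.1 j).orderTop :=
    fun j => HahnSeries.exists_forall_le_orderTop_sub (fun x : c => x.1 j)
      (fun x => b j + critExp f b x) fun ⟨x, hx⟩ ⟨x', hx'⟩ => by
        rcases hc.total hx hx' with (_ | hxx') | (_ | hx'x)
        · simp
        · rw [← neg_sub, HahnSeries.orderTop_neg]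
          exact le_trans (WithTop.coe_le_coe.2 (min_le_left _ _)) (hxx'.2 j)
        · simp
        · exact le_trans (WithTop.coe_le_coe.2 (min_le_right _ _)) (hx'x.2 j)
  choose u hu using hball
  refine ⟨u, fun x hx => ReflGen.single ⟨?_, fun j => hu j ⟨x, hx⟩⟩⟩
  obtain ⟨y, hy, hxy⟩ := hsucc x hx
  obtain ⟨z, -, hyz⟩ := hsucc y hy
  exact hxy.1.trans_le
    (orderTop_eval_le_of_critExp_le b hf hyz.eval_ne_zero fun j => hu j ⟨y, hy⟩)

theorem exists_reflGen_isNewtonStep_eval_eq_zero (hf : f.totalDegree ≠ 0) (x₀ : Fin n → K) :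
    ∃ y, ReflGen (IsNewtonStep f b) x₀ y ∧ eval y f = 0 := by
  have htrans : ∀ {x y z}, ReflGen (IsNewtonStep f b) x y → ReflGen (IsNewtonStep f b) y z →
      ReflGen (IsNewtonStep f b) x z := by
    rintro x y z (_ | hxy) (_ | hyz)
    exacts [.refl, .single hyz, .single hxy, .single (hxy.trans hf hyz)]
  obtain ⟨m, hm⟩ := exists_maximal_of_chains_bounded
    (r := fun p q : {y // ReflGen (IsNewtonStep f b) x₀ y} => ReflGen (IsNewtonStep f b) p.1 q.1)
    (fun c hc => by
      rcases c.eq_empty_or_nonempty with rfl | ⟨p, hp⟩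
      · exact ⟨⟨x₀, .refl⟩, by simp⟩
      obtain ⟨u, hu⟩ := (hc.image_of_map_rel _ _ Subtype.val fun _ _ h => h)
        |>.exists_upperBound_reflGen_isNewtonStep hf
      exact ⟨⟨u, htrans p.2 (hu p.1 ⟨p, hp, rfl⟩)⟩, fun a ha => hu a.1 ⟨a, ha, rfl⟩⟩)
    htrans
  refine ⟨m.1, m.2, by_contra fun hm0 => ?_⟩
  obtain ⟨y, hy⟩ := exists_isNewtonStep f b hf hm0
  rcases hm ⟨y, htrans m.2 (.single hy)⟩ (.single hy) with _ | hym
  · exact lt_irrefl _ hy.1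
  · exact lt_asymm hy.1 hym.1

end NewtonStep

section Kapranov

variable {n : ℕ} {f : MvPolynomial (Fin n) K} {b : Fin n → ℚ}

theorem order_pc_of_lt_orderTop_sub_single {y : K} {r : ℚ} {c : ℂ} (hc : c ≠ 0)
    (h : (r : WithTop ℚ) < (y - HahnSeries.single r c).orderTop) :
    y ≠ 0 ∧ y.order = r ∧ pc y = c := by
  have hlt : (HahnSeries.single r c).orderTop < (y - HahnSeries.single r c).orderTop := by
    rwa [HahnSeries.orderTop_single hc]
  have hy : y = HahnSeries.single r c + (y - HahnSeries.single r c) := (add_sub_cancel _ _).symm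
  have hord : y.orderTop = r := by
    rw [hy, HahnSeries.orderTop_add_eq_left hlt, HahnSeries.orderTop_single hc]
  have hy0 : y ≠ 0 := HahnSeries.orderTop_ne_top.1 (by simp [hord])
  refine ⟨hy0, WithTop.coe_eq_coe.1 ((HahnSeries.order_eq_orderTop_of_ne_zero hy0).trans hord),
    ?_⟩
  rw [pc, ← HahnSeries.leadingCoeff_eq, hy, HahnSeries.leadingCoeff_add_eq_left hlt,
    HahnSeries.leadingCoeff_of_single]

theorem eval_initForm_eq_zero_of_eval_eq_zero (hf : f ≠ 0) {x : Fin n → K} (hx0 : ∀ j, x j ≠ 0)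
    (hroot : eval x f = 0) (hord : ∀ j, (x j).order = b j) :
    eval (fun j => pc (x j)) (initForm f b) = 0 := by
  have hxb : ∀ j, (b j : WithTop ℚ) ≤ (x j).orderTop := fun j => by
    rw [← hord j, HahnSeries.order_eq_orderTop_of_ne_zero (hx0 j)]
  obtain ⟨w, hw⟩ := WithTop.ne_top_iff_exists.1 (trop_ne_top hf b)
  have hpc : (fun j => pc (x j)) = fun j => (x j).coeff (b j) := funext fun j => by rw [pc, hord]
  rw [hpc, ← coeff_eval_eq_eval_initForm hxb hw.symm, hroot, HahnSeries.coeff_zero]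

theorem exists_root_of_eval_initForm_eq_zero (hb : b ∈ tropSet f) {γ : Fin n → ℂ}
    (hγ : ∀ j, γ j ≠ 0) (h0 : eval γ (initForm f b) = 0) :
    ∃ x : Fin n → K, (∀ j, x j ≠ 0) ∧ eval x f = 0 ∧ (∀ j, (x j).order = b j) ∧
      ∀ j, pc (x j) = γ j := by
  set x₀ : Fin n → K := fun j => HahnSeries.single (b j) (γ j)
  suffices ∃ y, eval y f = 0 ∧ ∀ j, (b j : WithTop ℚ) < (y j - x₀ j).orderTop by
    obtain ⟨y, hy0, hy⟩ := this
    have H := fun j => order_pc_of_lt_orderTop_sub_single (hγ j) (hy j)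
    exact ⟨y, fun j => (H j).1, hy0, fun j => (H j).2.1, fun j => (H j).2.2⟩
  by_cases hroot : eval x₀ f = 0
  · exact ⟨x₀, hroot, fun j => by simp⟩
  obtain ⟨i, hi, i', hi', hii', -⟩ := hb
  have hf : f.totalDegree ≠ 0 := by
    by_cases hi0 : i = 0
    · exact totalDegree_ne_zero_of_mem_support hi' (hi0 ▸ Ne.symm hii')
    · exact totalDegree_ne_zero_of_mem_support hi hi0
  have hpos : 0 < critExp f b x₀ := zero_lt_critExp b hf hroot
    (fun j => HahnSeries.orderTop_single_le)
    (trop_lt_orderTop_eval_single h0 (trop_ne_top (fun h => by simp [h] at hi) b))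
  obtain ⟨y, hy | hy, hy0⟩ := exists_reflGen_isNewtonStep_eval_eq_zero (b := b) hf x₀
  · exact absurd hy0 hroot
  · exact ⟨y, hy0, fun j =>
      (WithTop.coe_lt_coe.2 (lt_add_of_pos_right _ hpos)).trans_le (hy.2 j)⟩

end Kapranov

/-- Extended Kapranov theorem (multivariate Newton–Puiseux lifting): given
`γ ∈ (ℂ*)ⁿ` and `b ∈ ℚⁿ`, the nonzero polynomial `f` has a root
`x ∈ (K*)ⁿ` with `o(x_j) = b_j` and `pc(x_j) = γ_j` if and only if
`b ∈ 𝒯(f)` and `f̃_b(γ) = 0`. -/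
theorem extended_kapranov (n : ℕ) (f : MvPolynomial (Fin n) K) (hf : f ≠ 0)
    (γ : Fin n → ℂ) (hγ : ∀ j, γ j ≠ 0) (b : Fin n → ℚ) :
    (∃ x : Fin n → K, (∀ j, x j ≠ 0) ∧ MvPolynomial.eval x f = 0 ∧
        (∀ j, (x j).order = b j) ∧ ∀ j, pc (x j) = γ j) ↔
      b ∈ tropSet f ∧ MvPolynomial.eval γ (initForm f b) = 0 := by
  constructor
  · rintro ⟨x, hx0, hroot, hord, hpc⟩
    have h0 := eval_initForm_eq_zero_of_eval_eq_zero hf hx0 hroot hord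
    simp only [hpc] at h0
    exact ⟨mem_tropSet_of_eval_initForm_eq_zero hf hγ h0, h0⟩
  · rintro ⟨hb, h0⟩
    exact exists_root_of_eval_initForm_eq_zero hb hγ h0
end
end

section
/- (Kapranov theorem, orders only.) Let f̃ ∈ K[x₁,…,x_n] be a polynomial over the field K of Puiseux series over ℂ, and let V_{f̃} ⊆ (K*)ⁿ be the set of roots of f̃ with all coordinates nonzero. Then the image of V_{f̃} under the componentwise order map O : (K*)ⁿ → ℚⁿ equals the tropical hypersurface 𝒯(f) = { r ∈ ℚⁿ : min_{i∈I} {o(ã_i) + i·r} is attained for at least two distinct indices i }. -/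
noncomputable section

/-!
If `x` is a root of `f`, the terms of least order in `f(x)` must cancel, so the minimum defining
`trop f` is attained twice. Conversely, for `b ∈ 𝒯(f)` the Kronecker substitution
`x_j = t^{b_j} u^{e_j}` turns `f` into a univariate `h` whose minimal coefficient order is
attained twice, so that its residue polynomial has a nonzero root `z₀ ∈ ℂ`. Newton's method from
`z₀` converges to a root of `h` of order `0`: at `y` one corrects by `c t^γ`, where `γ` is the
steepest slope of the Newton polygon of `h(y + X)` and `c` a nonzero root of the initial form
along that edge; this raises the order of `h(y)` and strictly increases the slope. Zorn's lemma
on chains of such steps, with the spherical completeness of Hahn series, supplies the limit.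
-/

open Polynomial

namespace HahnSeries

section Valuation

variable {Γ R : Type*} [AddCancelCommMonoid Γ] [LinearOrder Γ] [IsOrderedCancelAddMonoid Γ]
  [CommRing R] [IsDomain R]

theorem orderTop_pow (x : R⟦Γ⟧) (n : ℕ) : (x ^ n).orderTop = n • x.orderTop := by
  simpa only [addVal_apply] using (addVal Γ R).map_pow x n

theorem orderTop_prod {ι : Type*} (s : Finset ι) (f : ι → R⟦Γ⟧) :
    (∏ i ∈ s, f i).orderTop = ∑ i ∈ s, (f i).orderTop := by
  classical
  induction s using Finset.induction_on with
  | empty => simp [orderTop_one]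
  | insert i s hi ih => rw [Finset.prod_insert hi, Finset.sum_insert hi, orderTop_mul, ih]

theorem le_orderTop_sum {ι : Type*} {s : Finset ι} {f : ι → R⟦Γ⟧} {g : WithTop Γ}
    (h : ∀ i ∈ s, g ≤ (f i).orderTop) : g ≤ (∑ i ∈ s, f i).orderTop := by
  simpa only [addVal_apply] using (addVal Γ R).map_le_sum (by simpa only [addVal_apply] using h)

theorem lt_orderTop_sum {ι : Type*} {s : Finset ι} {f : ι → R⟦Γ⟧} {g : Γ}
    (h : ∀ i ∈ s, (g : WithTop Γ) < (f i).orderTop) :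
    (g : WithTop Γ) < (∑ i ∈ s, f i).orderTop := by
  simpa only [addVal_apply] using
    (addVal Γ R).map_lt_sum WithTop.coe_ne_top (by simpa only [addVal_apply] using h)

end Valuation

theorem leadingCoeff_pow {Γ R : Type*} [AddCommMonoid Γ] [LinearOrder Γ]
    [IsOrderedCancelAddMonoid Γ] [Semiring R] [NoZeroDivisors R] (x : R⟦Γ⟧) (n : ℕ) :
    (x ^ n).leadingCoeff = x.leadingCoeff ^ n := by
  induction n with
  | zero => rw [pow_zero, pow_zero, leadingCoeff_one]
  | succ n ih => rw [pow_succ, pow_succ, leadingCoeff_mul, ih]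

theorem coeff_natCast_mul {Γ R : Type*} [AddCommMonoid Γ] [PartialOrder Γ]
    [IsOrderedCancelAddMonoid Γ] [Semiring R] (m : ℕ) (x : R⟦Γ⟧) (g : Γ) :
    ((m : R⟦Γ⟧) * x).coeff g = m * x.coeff g := by
  rw [← nsmul_eq_mul, coeff_nsmul, Pi.smul_apply, nsmul_eq_mul]


section Coeff

variable {Γ R : Type*} [LinearOrder Γ] [Zero R] {x : R⟦Γ⟧} {g : Γ}

theorem lt_orderTop_of_coeff_eq_zero (h : (g : WithTop Γ) ≤ x.orderTop) (h0 : x.coeff g = 0) :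
    (g : WithTop Γ) < x.orderTop :=
  h.lt_of_ne fun he => coeff_orderTop_ne he.symm h0

theorem orderTop_eq_of_le_of_coeff_ne_zero (h : (g : WithTop Γ) ≤ x.orderTop)
    (h0 : x.coeff g ≠ 0) : x.orderTop = g :=
  (orderTop_le_of_coeff_ne_zero h0).antisymm h

theorem orderTop_eq_coe_iff [Zero Γ] : x.orderTop = g ↔ x ≠ 0 ∧ x.order = g := by
  refine ⟨fun h => ?_, fun ⟨hx, hg⟩ => by rw [← order_eq_orderTop_of_ne_zero hx, hg]⟩
  have hx : x ≠ 0 := orderTop_ne_top.mp (h ▸ WithTop.coe_ne_top)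
  exact ⟨hx, WithTop.coe_injective ((order_eq_orderTop_of_ne_zero hx).trans h)⟩

/-- Spherical completeness: compatible truncations have a common extension. -/
theorem exists_coeff_eq_of_pairwise_coeff_eq {S : Set R⟦Γ⟧} (γ : R⟦Γ⟧ → Γ)
    (h : ∀ y ∈ S, ∀ y' ∈ S, ∀ q < γ y, q < γ y' → y.coeff q = y'.coeff q) :
    ∃ ys : R⟦Γ⟧, ∀ y ∈ S, ∀ q < γ y, ys.coeff q = y.coeff q := by
  classical
  let c : Γ → R := fun q => if hq : ∃ y ∈ S, q < γ y then hq.choose.coeff q else 0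
  have hc : ∀ y ∈ S, ∀ q < γ y, c q = y.coeff q := fun y hy q hq =>
    have hq' : ∃ y ∈ S, q < γ y := ⟨y, hy, hq⟩
    (dif_pos hq').trans (h _ hq'.choose_spec.1 y hy q hq'.choose_spec.2 hq)
  have hwf : (Function.support c).IsWF := by
    rw [Set.isWF_iff_no_descending_seq]
    intro f hf hmem
    obtain ⟨y, hy, hq⟩ : ∃ y ∈ S, f 0 < γ y := by
      by_contra hne
      exact hmem 0 (dif_neg hne)
    refine Set.isWF_iff_no_descending_seq.mp y.isWF_support f hf fun k => ?_
    rw [mem_support, ← hc y hy (f k) ((hf.antitone k.zero_le).trans_lt hq)]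
    exact hmem k
  exact ⟨⟨c, hwf.isPWO⟩, hc⟩

end Coeff

theorem coeff_mul_of_le_orderTop_s8 {Γ R : Type*} [AddCommMonoid Γ] [LinearOrder Γ]
    [IsOrderedCancelAddMonoid Γ] [NonUnitalNonAssocSemiring R] {x y : R⟦Γ⟧} {g : Γ}
    (hx : (g : WithTop Γ) ≤ x.orderTop) (hy : y ≠ 0) :
    (x * y).coeff (g + y.order) = x.coeff g * y.leadingCoeff := by
  by_cases hxg : x.coeff g = 0
  · rw [hxg, zero_mul]
    refine coeff_eq_zero_of_lt_orderTop (lt_of_lt_of_le ?_ orderTop_add_le_mul)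
    rw [WithTop.coe_add, ← order_eq_orderTop_of_ne_zero hy]
    exact WithTop.add_lt_add_right WithTop.coe_ne_top (lt_orderTop_of_coeff_eq_zero hx hxg)
  · have hx0 : x ≠ 0 := fun h => hxg (by rw [h, coeff_zero])
    obtain rfl : x.order = g := WithTop.coe_injective
      ((order_eq_orderTop_of_ne_zero hx0).trans (orderTop_eq_of_le_of_coeff_ne_zero hx hxg))
    rw [coeff_mul_order_add_order, leadingCoeff_eq]

end HahnSeries

namespace Polynomial

theorem eval_hasseDeriv_natDegree {R : Type*} [CommSemiring R] (r : R) (p : R[X]) :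
    (hasseDeriv p.natDegree p).eval r = p.leadingCoeff := by
  rw [← taylor_coeff, coeff_taylor_natDegree]

theorem exists_ne_zero_isRoot {k : Type*} [Field k] [IsAlgClosed k] {p : k[X]} {m₁ m₂ : ℕ}
    (hm : m₁ ≠ m₂) (h₁ : p.coeff m₁ ≠ 0) (h₂ : p.coeff m₂ ≠ 0) : ∃ z ≠ 0, p.IsRoot z := by
  by_contra! hroot
  have hroots : p.roots = Multiset.replicate p.natDegree 0 :=
    Multiset.eq_replicate.mpr ⟨IsAlgClosed.card_roots_eq_natDegree, fun z hz => by
      by_contra hz0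
      exact hroot z hz0 (isRoot_of_mem_roots hz)⟩
  have hmono : p = C p.leadingCoeff * X ^ p.natDegree := by
    conv_lhs => rw [← C_leadingCoeff_mul_prod_multiset_X_sub_C
      (IsAlgClosed.card_roots_eq_natDegree (p := p))]
    simp [hroots]
  have hsupp : ∀ m, p.coeff m ≠ 0 → m = p.natDegree := fun m hm0 => by
    rw [hmono, coeff_C_mul_X_pow] at hm0
    exact of_not_not fun hne => hm0 (if_neg hne)
  exact hm ((hsupp m₁ h₁).trans (hsupp m₂ h₂).symm)

end Polynomial

theorem IsMaxChain.not_forall_rel {α : Type*} {r : α → α → Prop} {M : Set α}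
    (hM : IsMaxChain r M) (hirr : ∀ a, ¬r a a) (a : α) : ¬∀ b ∈ M, r b a := by
  intro h
  have hchain : IsChain r (insert a M) := hM.1.insert fun b hb _ => Or.inr (h b hb)
  have ha : a ∈ M := by
    rw [hM.2 hchain (Set.subset_insert a M)]
    exact Set.mem_insert a M
  exact hirr a (h a ha)

theorem Nat.ofDigits_ofFn (b : ℕ) {n : ℕ} (f : Fin n → ℕ) :
    Nat.ofDigits b (List.ofFn f) = ∑ j, f j * b ^ (j : ℕ) := by
  induction n with
  | zero => simp
  | succ n ih =>
    rw [List.ofFn_succ, Nat.ofDigits_cons, ih, Fin.sum_univ_succ, Finset.mul_sum]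
    simp only [Fin.val_zero, pow_zero, mul_one, Fin.val_succ, pow_succ]
    congr 1
    exact Finset.sum_congr rfl fun j _ => by ring

theorem Nat.eq_of_sum_mul_pow_eq {b n : ℕ} (hb : 1 < b) {f g : Fin n → ℕ} (hf : ∀ j, f j < b)
    (hg : ∀ j, g j < b) (h : ∑ j, f j * b ^ (j : ℕ) = ∑ j, g j * b ^ (j : ℕ)) : f = g := by
  refine List.ofFn_injective (Nat.ofDigits_inj_of_len_eq hb (by simp) ?_ ?_ ?_)
  · simpa [List.mem_ofFn] using hf
  · simpa [List.mem_ofFn] using hg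
  · rwa [Nat.ofDigits_ofFn, Nat.ofDigits_ofFn]

namespace Kapranov

open HahnSeries

/-- The coefficients of `P` read on the line of slope `-γ` through `(0, a)` of its Newton
diagram. -/
def edgePoly (P : K[X]) (a γ : ℚ) : ℂ[X] :=
  ∑ k ∈ P.support, monomial k ((P.coeff k).coeff (a - k * γ))

theorem coeff_edgePoly (P : K[X]) (a γ : ℚ) (k : ℕ) :
    (edgePoly P a γ).coeff k = (P.coeff k).coeff (a - k * γ) := by
  rw [edgePoly, finsetSum_coeff, Finset.sum_eq_single k]
  · rw [coeff_monomial_same]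
  · exact fun j _ hj => coeff_monomial_of_ne _ hj.symm
  · intro hk
    rw [notMem_support_iff.mp hk, coeff_monomial_same, HahnSeries.coeff_zero]

theorem natDegree_edgePoly_le (P : K[X]) (a γ : ℚ) : (edgePoly P a γ).natDegree ≤ P.natDegree :=
  natDegree_le_iff_coeff_eq_zero.mpr fun k hk => by
    rw [coeff_edgePoly, coeff_eq_zero_of_natDegree_lt hk, HahnSeries.coeff_zero]

theorem edgePoly_hasseDeriv (P : K[X]) (a γ : ℚ) (k : ℕ) :
    edgePoly (hasseDeriv k P) (a - k * γ) γ = hasseDeriv k (edgePoly P a γ) := by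
  ext j
  rw [coeff_edgePoly, hasseDeriv_coeff, hasseDeriv_coeff, coeff_edgePoly,
    HahnSeries.coeff_natCast_mul,
    show a - k * γ - j * γ = a - ((j + k : ℕ) : ℚ) * γ by push_cast; ring]

def AboveLine (P : K[X]) (a γ : ℚ) : Prop :=
  ∀ j : ℕ, ((a - j * γ : ℚ) : WithTop ℚ) ≤ (P.coeff j).orderTop

namespace AboveLine

variable {P : K[X]} {a γ : ℚ} {z : K}

theorem le_orderTop_eval (hP : AboveLine P a γ) (hz : (γ : WithTop ℚ) ≤ z.orderTop) :
    (a : WithTop ℚ) ≤ (P.eval z).orderTop := by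
  rw [eval_eq_sum, sum_def]
  refine le_orderTop_sum fun j _ => ?_
  rw [orderTop_mul, orderTop_pow]
  calc (a : WithTop ℚ) = ((a - j * γ : ℚ) : WithTop ℚ) + j • (γ : WithTop ℚ) := by
        rw [← WithTop.coe_nsmul, ← WithTop.coe_add, nsmul_eq_mul, sub_add_cancel]
    _ ≤ _ := add_le_add (hP j) (nsmul_le_nsmul_right hz j)

theorem coeff_eval (hP : AboveLine P a γ) (hz : z.orderTop = γ) :
    (P.eval z).coeff a = (edgePoly P a γ).eval z.leadingCoeff := by
  obtain ⟨hz0, hzγ⟩ := orderTop_eq_coe_iff.mp hz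
  rw [eval_eq_sum, sum_def, edgePoly, eval_finsetSum, HahnSeries.coeff_sum]
  refine Finset.sum_congr rfl fun j _ => ?_
  have ha : a = (a - j * γ) + (z ^ j).order := by
    rw [order_pow, hzγ, nsmul_eq_mul, sub_add_cancel]
  have key := coeff_mul_of_le_orderTop_s8 (hP j) (pow_ne_zero j hz0)
  rw [← ha] at key
  rw [eval_monomial, key, HahnSeries.leadingCoeff_pow]

theorem hasseDeriv (hP : AboveLine P a γ) (k : ℕ) : AboveLine (hasseDeriv k P) (a - k * γ) γ := by
  intro j
  rw [le_orderTop_iff_forall]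
  intro q hq
  rw [hasseDeriv_coeff, HahnSeries.coeff_natCast_mul,
    coeff_eq_zero_of_lt_orderTop (hq.trans_le ?_), mul_zero]
  convert hP (j + k) using 2
  push_cast
  ring

theorem le_orderTop_coeff_taylor (hP : AboveLine P a γ) (hz : (γ : WithTop ℚ) ≤ z.orderTop)
    (k : ℕ) : ((a - k * γ : ℚ) : WithTop ℚ) ≤ ((taylor z P).coeff k).orderTop := by
  rw [taylor_coeff]
  exact (hP.hasseDeriv k).le_orderTop_eval hz

theorem coeff_coeff_taylor (hP : AboveLine P a γ) (hz : z.orderTop = γ) (k : ℕ) :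
    ((taylor z P).coeff k).coeff (a - k * γ) =
      (Polynomial.hasseDeriv k (edgePoly P a γ)).eval z.leadingCoeff := by
  rw [taylor_coeff, (hP.hasseDeriv k).coeff_eval hz, edgePoly_hasseDeriv]

end AboveLine

/-- The order of the next Newton correction at `y`: the steepest slope from the constant term of
`H(y + X)` to another vertex of its Newton polygon (`0` when `H` is constant). -/
def newtonSlope (H : K[X]) (y : K) : ℚ :=
  if h : ((taylor y H).support.erase 0).Nonempty then
    ((taylor y H).support.erase 0).sup' h fun k =>
      ((H.eval y).order - ((taylor y H).coeff k).order) / k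
  else 0

/-- The initial form of `H(y + X)` along the edge of slope `newtonSlope H y`. -/
def newtonPoly (H : K[X]) (y : K) : ℂ[X] :=
  edgePoly (taylor y H) (H.eval y).order (newtonSlope H y)

section Newton

variable {H : K[X]} {y y' y'' z : K}

theorem div_le_newtonSlope {k : ℕ} (hk : k ≠ 0) (hck : (taylor y H).coeff k ≠ 0) :
    ((H.eval y).order - ((taylor y H).coeff k).order) / k ≤ newtonSlope H y := by
  have hmem : k ∈ (taylor y H).support.erase 0 := Finset.mem_erase.mpr ⟨hk, mem_support_iff.mpr hck⟩
  rw [newtonSlope, dif_pos ⟨k, hmem⟩]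
  exact Finset.le_sup' (fun k => ((H.eval y).order - ((taylor y H).coeff k).order) / k) hmem

theorem aboveLine_taylor (H : K[X]) (y : K) :
    AboveLine (taylor y H) (H.eval y).order (newtonSlope H y) := by
  intro k
  rcases eq_or_ne ((taylor y H).coeff k) 0 with hck | hck
  · rw [hck, orderTop_zero]
    exact le_top
  rw [← order_eq_orderTop_of_ne_zero hck, WithTop.coe_le_coe]
  rcases eq_or_ne k 0 with rfl | hk
  · rw [taylor_coeff_zero, Nat.cast_zero, zero_mul, sub_zero]
  have hslope := div_le_newtonSlope hk hck
  rw [div_le_iff₀ (by positivity)] at hslope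
  linarith

theorem exists_orderTop_coeff_taylor_eq (hd : 0 < H.natDegree) (y : K) :
    ∃ k ≠ 0, ((taylor y H).coeff k).orderTop = ((H.eval y).order - k * newtonSlope H y : ℚ) := by
  have hne : ((taylor y H).support.erase 0).Nonempty := by
    refine ⟨H.natDegree, Finset.mem_erase.mpr ⟨hd.ne', mem_support_iff.mpr ?_⟩⟩
    rw [coeff_taylor_natDegree, Ne, Polynomial.leadingCoeff_eq_zero]
    rintro rfl
    exact hd.ne' natDegree_zero
  obtain ⟨k, hk, hmax⟩ := Finset.exists_mem_eq_sup' hne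
    fun k => ((H.eval y).order - ((taylor y H).coeff k).order) / k
  obtain ⟨hk0, hck⟩ := Finset.mem_erase.mp hk
  refine ⟨k, hk0, ?_⟩
  rw [← order_eq_orderTop_of_ne_zero (mem_support_iff.mp hck), newtonSlope, dif_pos hne, hmax,
    WithTop.coe_inj]
  field_simp
  ring

theorem le_orderTop_coeff_taylor_add (hz : (newtonSlope H y : WithTop ℚ) ≤ z.orderTop) (k : ℕ) :
    (((H.eval y).order - k * newtonSlope H y : ℚ) : WithTop ℚ) ≤
      ((taylor (y + z) H).coeff k).orderTop := by
  rw [add_comm, ← taylor_taylor]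
  exact (aboveLine_taylor H y).le_orderTop_coeff_taylor hz k

theorem coeff_coeff_taylor_add (hz : z.orderTop = newtonSlope H y) (k : ℕ) :
    ((taylor (y + z) H).coeff k).coeff ((H.eval y).order - k * newtonSlope H y) =
      (hasseDeriv k (newtonPoly H y)).eval z.leadingCoeff := by
  rw [add_comm, ← taylor_taylor]
  exact (aboveLine_taylor H y).coeff_coeff_taylor hz k

theorem coeff_newtonPoly_zero_ne_zero (hy : H.eval y ≠ 0) : (newtonPoly H y).coeff 0 ≠ 0 := by
  rw [newtonPoly, coeff_edgePoly, taylor_coeff_zero, Nat.cast_zero, zero_mul, sub_zero,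
    ← leadingCoeff_eq]
  exact leadingCoeff_ne_zero.mpr hy

theorem exists_coeff_newtonPoly_ne_zero (hd : 0 < H.natDegree) (y : K) :
    ∃ k ≠ 0, (newtonPoly H y).coeff k ≠ 0 := by
  obtain ⟨k, hk, hck⟩ := exists_orderTop_coeff_taylor_eq hd y
  exact ⟨k, hk, by rw [newtonPoly, coeff_edgePoly]; exact coeff_orderTop_ne hck⟩

theorem exists_orderTop_eq_newtonSlope_lt (hd : 0 < H.natDegree) (hy : H.eval y ≠ 0) :
    ∃ z : K, z.orderTop = newtonSlope H y ∧
      ((H.eval y).order : WithTop ℚ) < (H.eval (y + z)).orderTop := by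
  obtain ⟨k, hk, hck⟩ := exists_coeff_newtonPoly_ne_zero hd y
  obtain ⟨z₁, hz₁, hroot⟩ := exists_ne_zero_isRoot hk.symm (coeff_newtonPoly_zero_ne_zero hy) hck
  have hz : (single (newtonSlope H y) z₁).orderTop = newtonSlope H y := orderTop_single hz₁
  refine ⟨single (newtonSlope H y) z₁, hz, ?_⟩
  have hle := le_orderTop_coeff_taylor_add hz.ge 0
  have hcoeff := coeff_coeff_taylor_add hz 0
  rw [Nat.cast_zero, zero_mul, sub_zero, taylor_coeff_zero] at hle hcoeff
  rw [hasseDeriv_zero, LinearMap.id_apply, leadingCoeff_of_single, hroot.eq_zero] at hcoeff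
  exact lt_orderTop_of_coeff_eq_zero hle hcoeff

theorem newtonSlope_lt_newtonSlope_add (hd : 0 < H.natDegree) (hz : z.orderTop = newtonSlope H y)
    (hlt : ((H.eval y).order : WithTop ℚ) < (H.eval (y + z)).orderTop)
    (hne : H.eval (y + z) ≠ 0) : newtonSlope H y < newtonSlope H (y + z) := by
  set m := (newtonPoly H y).natDegree
  obtain ⟨k, hk, hck⟩ := exists_coeff_newtonPoly_ne_zero hd y
  have hm : m ≠ 0 := fun h => hk (Nat.le_zero.mp (h ▸ le_natDegree_of_ne_zero hck))
  have hcoeff :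
      ((taylor (y + z) H).coeff m).coeff ((H.eval y).order - m * newtonSlope H y) ≠ 0 := by
    rw [coeff_coeff_taylor_add hz, eval_hasseDeriv_natDegree, Ne, Polynomial.leadingCoeff_eq_zero]
    rintro h
    exact hck (by rw [h, Polynomial.coeff_zero])
  obtain ⟨hcm, hcmo⟩ := orderTop_eq_coe_iff.mp
    (orderTop_eq_of_le_of_coeff_ne_zero (le_orderTop_coeff_taylor_add hz.ge m) hcoeff)
  have hslope := div_le_newtonSlope hm hcm
  rw [hcmo] at hslope
  rw [← order_eq_orderTop_of_ne_zero hne, WithTop.coe_lt_coe] at hlt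
  refine lt_of_lt_of_le ?_ hslope
  rw [lt_div_iff₀ (by positivity)]
  linarith

theorem le_orderTop_eval_add (hz : (newtonSlope H y : WithTop ℚ) ≤ z.orderTop) :
    ((H.eval y).order : WithTop ℚ) ≤ (H.eval (y + z)).orderTop := by
  simpa [taylor_coeff_zero] using le_orderTop_coeff_taylor_add hz 0

structure NewtonRel (H : K[X]) (y y' : K) : Prop where
  eval_ne_zero : H.eval y ≠ 0
  lt_orderTop_eval : ((H.eval y).order : WithTop ℚ) < (H.eval y').orderTop
  orderTop_sub : (y' - y).orderTop = newtonSlope H y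
  newtonSlope_lt : H.eval y' ≠ 0 → newtonSlope H y < newtonSlope H y'

theorem NewtonRel.irrefl (y : K) : ¬NewtonRel H y y := fun h =>
  (order_eq_orderTop_of_ne_zero h.eval_ne_zero ▸ h.lt_orderTop_eval).false

theorem NewtonRel.trans (h₁ : NewtonRel H y y') (h₂ : NewtonRel H y' y'') : NewtonRel H y y'' where
  eval_ne_zero := h₁.eval_ne_zero
  lt_orderTop_eval := h₁.lt_orderTop_eval.trans <|
    (order_eq_orderTop_of_ne_zero h₂.eval_ne_zero).symm ▸ h₂.lt_orderTop_eval
  orderTop_sub := by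
    have hlt : (y' - y).orderTop < (y'' - y').orderTop := by
      rw [h₁.orderTop_sub, h₂.orderTop_sub, WithTop.coe_lt_coe]
      exact h₁.newtonSlope_lt h₂.eval_ne_zero
    rw [show y'' - y = (y' - y) + (y'' - y') by ring, orderTop_add_eq_left hlt, h₁.orderTop_sub]
  newtonSlope_lt h := (h₁.newtonSlope_lt h₂.eval_ne_zero).trans (h₂.newtonSlope_lt h)

theorem exists_newtonRel (hd : 0 < H.natDegree) (hy : H.eval y ≠ 0) : ∃ y', NewtonRel H y y' := by
  obtain ⟨z, hz, hlt⟩ := exists_orderTop_eq_newtonSlope_lt hd hy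
  exact ⟨y + z, hy, hlt, by rwa [add_sub_cancel_left], newtonSlope_lt_newtonSlope_add hd hz hlt⟩

section Chain

variable {M : Set K}

theorem exists_pseudoLimit (hM : IsChain (NewtonRel H) M)
    (hsucc : ∀ y ∈ M, ∃ y' ∈ M, NewtonRel H y y') :
    ∃ ys : K, ∀ y ∈ M, (ys - y).orderTop = newtonSlope H y := by
  have hagree : ∀ y ∈ M, ∀ y' ∈ M, ∀ q < newtonSlope H y, q < newtonSlope H y' →
      y.coeff q = y'.coeff q := by
    have key : ∀ {y y'}, NewtonRel H y y' → ∀ q < newtonSlope H y, y.coeff q = y'.coeff q :=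
      fun hr q hq => (sub_eq_zero.mp (by
        rw [← HahnSeries.coeff_sub]
        exact coeff_eq_zero_of_lt_orderTop (hr.orderTop_sub ▸ WithTop.coe_lt_coe.mpr hq))).symm
    intro y hy y' hy' q hq hq'
    rcases eq_or_ne y y' with rfl | hne
    · rfl
    rcases hM hy hy' hne with hr | hr
    · exact key hr q hq
    · exact (key hr q hq').symm
  obtain ⟨ys, hys⟩ := exists_coeff_eq_of_pairwise_coeff_eq (newtonSlope H) hagree
  refine ⟨ys, fun y hy => ?_⟩
  obtain ⟨y', hy', hr⟩ := hsucc y hy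
  obtain ⟨_, _, hr'⟩ := hsucc y' hy'
  have hys' : (newtonSlope H y' : WithTop ℚ) ≤ (ys - y').orderTop :=
    le_orderTop_iff_forall.mpr fun q hq => by
      rw [HahnSeries.coeff_sub, hys y' hy' q (WithTop.coe_lt_coe.mp hq), sub_self]
  have hlt : (y' - y).orderTop < (ys - y').orderTop := by
    rw [hr.orderTop_sub]
    exact (WithTop.coe_lt_coe.mpr (hr.newtonSlope_lt hr'.eval_ne_zero)).trans_le hys'
  rw [show ys - y = (y' - y) + (ys - y') by ring, orderTop_add_eq_left hlt, hr.orderTop_sub]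

theorem newtonRel_pseudoLimit (hd : 0 < H.natDegree)
    (hsucc : ∀ y ∈ M, ∃ y' ∈ M, NewtonRel H y y') {ys : K}
    (hys : ∀ y ∈ M, (ys - y).orderTop = newtonSlope H y) (hne : H.eval ys ≠ 0) :
    ∀ y ∈ M, NewtonRel H y ys := by
  have hprogress : ∀ y ∈ M, ((H.eval y).order : WithTop ℚ) < (H.eval ys).orderTop := by
    intro y hy
    obtain ⟨y', hy', hr⟩ := hsucc y hy
    obtain ⟨_, _, hr'⟩ := hsucc y' hy'
    have hle := le_orderTop_eval_add (hys y' hy').ge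
    rw [add_sub_cancel] at hle
    have hlt := hr.lt_orderTop_eval
    rw [← order_eq_orderTop_of_ne_zero hr'.eval_ne_zero] at hlt
    exact hlt.trans_le hle
  intro y hy
  obtain ⟨y', hy', hr⟩ := hsucc y hy
  obtain ⟨_, _, hr'⟩ := hsucc y' hy'
  have hgrow := newtonSlope_lt_newtonSlope_add hd (hys y' hy')
    (by rw [add_sub_cancel]; exact hprogress y' hy') (by rwa [add_sub_cancel])
  rw [add_sub_cancel] at hgrow
  exact ⟨hr.eval_ne_zero, hprogress y hy, hys y hy,
    fun _ => (hr.newtonSlope_lt hr'.eval_ne_zero).trans hgrow⟩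

theorem exists_newtonRel_mem_of_isMaxChain (hd : 0 < H.natDegree)
    (hM : IsMaxChain (NewtonRel H) M) (hroot : ∀ y ∈ M, H.eval y ≠ 0) :
    ∀ y ∈ M, ∃ y' ∈ M, NewtonRel H y y' := by
  by_contra! hmax
  obtain ⟨y, hy, hy'⟩ := hmax
  obtain ⟨y', hr⟩ := exists_newtonRel hd (hroot y hy)
  refine hM.not_forall_rel NewtonRel.irrefl y' fun b hb => ?_
  rcases eq_or_ne b y with rfl | hne
  · exact hr
  rcases hM.1 hb hy hne with hb' | hb'
  · exact hb'.trans hr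
  · exact (hy' b hb hb').elim

end Chain

theorem exists_root_orderTop_sub_eq (hd : 0 < H.natDegree) {y₀ : K} (hy₀ : H.eval y₀ ≠ 0) :
    ∃ u : K, H.eval u = 0 ∧ (u - y₀).orderTop = newtonSlope H y₀ := by
  obtain ⟨M, hM, hy₀M⟩ := (Set.subsingleton_singleton (a := y₀)).isChain.exists_maxChain
    (r := NewtonRel H)
  have hy₀M : y₀ ∈ M := hy₀M rfl
  by_cases hroot : ∃ y ∈ M, H.eval y = 0
  · obtain ⟨y, hy, hy0⟩ := hroot
    have hne : y₀ ≠ y := by rintro rfl; exact hy₀ hy0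
    refine ⟨y, hy0, ?_⟩
    rcases hM.1 hy₀M hy hne with hr | hr
    · exact hr.orderTop_sub
    · exact (hr.eval_ne_zero hy0).elim
  push Not at hroot
  have hsucc := exists_newtonRel_mem_of_isMaxChain hd hM hroot
  obtain ⟨ys, hys⟩ := exists_pseudoLimit hM.1 hsucc
  by_cases hys0 : H.eval ys = 0
  · exact ⟨ys, hys0, hys y₀ hy₀M⟩
  · exact (hM.not_forall_rel NewtonRel.irrefl ys
      (newtonRel_pseudoLimit hd hsucc hys hys0)).elim

end Newton

section Univariate

variable {h : K[X]} {L : ℚ}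

theorem newtonSlope_pos (hL : AboveLine h L 0) {y₀ : K}
    (hy₀ : y₀.orderTop = 0) (hroot : (edgePoly h L 0).IsRoot y₀.leadingCoeff)
    (hφ : edgePoly h L 0 ≠ 0) (hne : h.eval y₀ ≠ 0) : 0 < newtonSlope h y₀ := by
  have hz : y₀.orderTop = (0 : ℚ) := by rw [hy₀, WithTop.coe_zero]
  have hcoeff k := hL.coeff_coeff_taylor hz k
  have hle := hL.le_orderTop_coeff_taylor hz.ge
  simp only [mul_zero, sub_zero] at hcoeff hle
  set m := (edgePoly h L 0).natDegree
  have hm : m ≠ 0 := fun hm0 => by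
    rw [eq_C_of_natDegree_eq_zero hm0, IsRoot, eval_C] at hroot
    exact hφ (by rw [eq_C_of_natDegree_eq_zero hm0, hroot, map_zero])
  have hc₀ : L < (h.eval y₀).order := by
    have := lt_orderTop_of_coeff_eq_zero (hle 0) (by rw [hcoeff, hasseDeriv_zero]; exact hroot)
    rwa [taylor_coeff_zero, ← order_eq_orderTop_of_ne_zero hne, WithTop.coe_lt_coe] at this
  obtain ⟨hcm, hcmo⟩ := orderTop_eq_coe_iff.mp (orderTop_eq_of_le_of_coeff_ne_zero (hle m) (by
    rw [hcoeff, eval_hasseDeriv_natDegree, Ne, Polynomial.leadingCoeff_eq_zero]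
    exact hφ))
  have hslope := div_le_newtonSlope hm hcm
  rw [hcmo] at hslope
  exact (div_pos (sub_pos.mpr hc₀) (by positivity)).trans_le hslope

/-- The hypotheses say that the minimal order `L` of the coefficients of `h` is attained
twice. -/
theorem exists_root_orderTop_eq_zero (hL : AboveLine h L 0)
    {m₁ m₂ : ℕ} (hm : m₁ ≠ m₂) (h₁ : (edgePoly h L 0).coeff m₁ ≠ 0)
    (h₂ : (edgePoly h L 0).coeff m₂ ≠ 0) : ∃ u : K, u.orderTop = 0 ∧ h.eval u = 0 := by
  obtain ⟨z₀, hz₀, hroot⟩ := exists_ne_zero_isRoot hm h₁ h₂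
  have hy₀ : (single 0 z₀ : K).orderTop = 0 := by rw [orderTop_single hz₀, WithTop.coe_zero]
  by_cases hne : h.eval (single 0 z₀) = 0
  · exact ⟨single 0 z₀, hy₀, hne⟩
  have hd : 0 < h.natDegree := by
    have hle₁ := (le_natDegree_of_ne_zero h₁).trans (natDegree_edgePoly_le h L 0)
    have hle₂ := (le_natDegree_of_ne_zero h₂).trans (natDegree_edgePoly_le h L 0)
    omega
  have hpos := newtonSlope_pos hL hy₀ (by rwa [leadingCoeff_of_single])
    (fun hφ => h₁ (by rw [hφ, Polynomial.coeff_zero])) hne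
  obtain ⟨u, hu, hdist⟩ := exists_root_orderTop_sub_eq hd hne
  refine ⟨u, ?_, hu⟩
  rw [← add_sub_cancel (single 0 z₀) u,
    orderTop_add_eq_left (by rw [hy₀, hdist]; exact_mod_cast hpos), hy₀]

end Univariate

section Tropical

open MvPolynomial

variable {n : ℕ} {f : MvPolynomial (Fin n) K} {b : Fin n → ℚ}

theorem mem_tropSet_iff : b ∈ tropSet f ↔ ∃ i ∈ f.support, ∃ j ∈ f.support, i ≠ j ∧
    wt f b j = wt f b i ∧ ∀ k ∈ f.support, wt f b i ≤ wt f b k := by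
  constructor
  · rintro ⟨i, hi, j, hj, hij, hwi, hwj⟩
    refine ⟨i, hi, j, hj, hij, WithTop.coe_injective (hwj.trans hwi.symm), fun k hk => ?_⟩
    exact WithTop.coe_le_coe.mp (hwi ▸ Finset.inf_le hk)
  · rintro ⟨i, hi, j, hj, hij, hw, hmin⟩
    have htrop : trop f b = wt f b i :=
      (Finset.inf_le hi).antisymm (Finset.le_inf fun k hk => WithTop.coe_le_coe.mpr (hmin k hk))
    exact ⟨i, hi, j, hj, hij, htrop.symm, by rw [hw, htrop]⟩

theorem orderTop_coeff_mul_prod_pow {x : Fin n → K} (hx : ∀ j, (x j).orderTop = b j)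
    {i : Fin n →₀ ℕ} (hi : i ∈ f.support) :
    (f.coeff i * ∏ j, x j ^ i j).orderTop = wt f b i := by
  rw [orderTop_mul, orderTop_prod, ← order_eq_orderTop_of_ne_zero (mem_support_iff.mp hi), wt,
    WithTop.coe_add, WithTop.coe_sum]
  simp only [orderTop_pow, hx, ← WithTop.coe_nsmul, nsmul_eq_mul]

theorem mem_tropSet_of_eval_eq_zero (hf : f ≠ 0) {x : Fin n → K}
    (hx : ∀ j, (x j).orderTop = b j) (hroot : eval x f = 0) : b ∈ tropSet f := by
  obtain ⟨i, hi, hmin⟩ := f.support.exists_min_image (wt f b)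
    (Finset.nonempty_iff_ne_empty.mpr (support_eq_empty.not.mpr hf))
  suffices ∃ j ∈ f.support, j ≠ i ∧ wt f b j = wt f b i by
    obtain ⟨j, hj, hji, hw⟩ := this
    exact mem_tropSet_iff.mpr ⟨i, hi, j, hj, hji.symm, hw, hmin⟩
  by_contra! hunique
  have hrest : (wt f b i : WithTop ℚ) <
      (∑ j ∈ f.support.erase i, f.coeff j * ∏ k, x k ^ j k).orderTop := by
    refine lt_orderTop_sum fun j hj => ?_
    obtain ⟨hji, hj⟩ := Finset.mem_erase.mp hj
    rw [orderTop_coeff_mul_prod_pow hx hj, WithTop.coe_lt_coe]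
    exact (hmin j hj).lt_of_ne (hunique j hj hji).symm
  have hsum := orderTop_add_eq_left ((orderTop_coeff_mul_prod_pow hx hi).trans_lt hrest)
  rw [Finset.add_sum_erase _ (fun j => f.coeff j * ∏ k, x k ^ j k) hi, ← eval_eq', hroot,
    orderTop_zero, orderTop_coeff_mul_prod_pow hx hi] at hsum
  exact WithTop.top_ne_coe hsum

def kroneckerPoly {R : Type*} [CommSemiring R] (f : MvPolynomial (Fin n) R) (s : Fin n → R)
    (e : Fin n → ℕ) : R[X] :=
  ∑ i ∈ f.support, monomial (∑ j, i j * e j) (f.coeff i * ∏ j, s j ^ i j)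

theorem eval_kroneckerPoly {R : Type*} [CommSemiring R] (f : MvPolynomial (Fin n) R)
    (s : Fin n → R) (e : Fin n → ℕ) (u : R) :
    (kroneckerPoly f s e).eval u = eval (fun j => s j * u ^ e j) f := by
  rw [kroneckerPoly, eval_eq', eval_finsetSum]
  refine Finset.sum_congr rfl fun i _ => ?_
  simp only [Polynomial.eval_monomial, mul_pow, Finset.prod_mul_distrib, ← pow_mul,
    Finset.prod_pow_eq_pow_sum, mul_assoc, mul_comm (e _)]

theorem coeff_kroneckerPoly {s : Fin n → K} {e : Fin n → ℕ}
    (he : Set.InjOn (fun i : Fin n →₀ ℕ => ∑ j, i j * e j) f.support) {i : Fin n →₀ ℕ}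
    (hi : i ∈ f.support) :
    (kroneckerPoly f s e).coeff (∑ j, i j * e j) = f.coeff i * ∏ j, s j ^ i j := by
  rw [kroneckerPoly, finsetSum_coeff, Finset.sum_eq_single i, coeff_monomial_same]
  · exact fun i' hi' hne => coeff_monomial_of_ne _ fun h => hne (he hi' hi h.symm)
  · exact fun h => (h hi).elim

theorem aboveLine_kroneckerPoly {s : Fin n → K} (hs : ∀ j, (s j).orderTop = b j)
    (e : Fin n → ℕ) {i₀ : Fin n →₀ ℕ} (hmin : ∀ i ∈ f.support, wt f b i₀ ≤ wt f b i) :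
    AboveLine (kroneckerPoly f s e) (wt f b i₀) 0 := fun k => by
  rw [mul_zero, sub_zero, kroneckerPoly, finsetSum_coeff]
  refine le_orderTop_sum fun i hi => ?_
  rw [Polynomial.coeff_monomial]
  split_ifs
  · rw [orderTop_coeff_mul_prod_pow hs hi, WithTop.coe_le_coe]
    exact hmin i hi
  · rw [orderTop_zero]
    exact le_top

/-- Exponent vectors of `f` are digit strings in base `D + 2`, `D` the total degree. -/
theorem injOn_sum_mul_pow_totalDegree :
    Set.InjOn (fun i : Fin n →₀ ℕ => ∑ j, i j * (f.totalDegree + 2) ^ (j : ℕ)) f.support := by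
  have hdigit : ∀ i ∈ f.support, ∀ j, i j < f.totalDegree + 2 := fun i hi j => by
    have := (monomial_le_degreeOf j hi).trans (degreeOf_le_totalDegree f j)
    omega
  exact fun i hi i' hi' hii' => Finsupp.ext <| congrFun <|
    Nat.eq_of_sum_mul_pow_eq (by omega) (hdigit i hi) (hdigit i' hi') hii'

/-- The root is `x_j = t^{b_j} u^{(D + 2)^j}`, where `u` is a root of order `0` of the univariate
polynomial obtained by this substitution. -/
theorem exists_root_of_mem_tropSet (hb : b ∈ tropSet f) :
    ∃ x : Fin n → K, (∀ j, (x j).orderTop = b j) ∧ eval x f = 0 := by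
  obtain ⟨i₀, hi₀, j₀, hj₀, hne, hw, hmin⟩ := mem_tropSet_iff.mp hb
  let s : Fin n → K := fun j => single (b j) 1
  have hs : ∀ j, (s j).orderTop = b j := fun j => orderTop_single one_ne_zero
  let e : Fin n → ℕ := fun j => (f.totalDegree + 2) ^ (j : ℕ)
  have he := injOn_sum_mul_pow_totalDegree (f := f)
  have hedge : ∀ i ∈ f.support, wt f b i = wt f b i₀ →
      (edgePoly (kroneckerPoly f s e) (wt f b i₀) 0).coeff (∑ j, i j * e j) ≠ 0 :=
    fun i hi hwi => by
      rw [coeff_edgePoly, coeff_kroneckerPoly he hi, mul_zero, sub_zero, ← hwi]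
      exact coeff_orderTop_ne (orderTop_coeff_mul_prod_pow hs hi)
  obtain ⟨u, hu, hroot⟩ := exists_root_orderTop_eq_zero (aboveLine_kroneckerPoly hs e hmin)
    (fun h => hne (he hi₀ hj₀ h)) (hedge i₀ hi₀ rfl) (hedge j₀ hj₀ hw)
  refine ⟨fun j => s j * u ^ e j, fun j => ?_, by rwa [← eval_kroneckerPoly]⟩
  rw [orderTop_mul, orderTop_pow, hu, smul_zero, add_zero, hs]

end Tropical

end Kapranov

/-- Kapranov theorem (orders only): the image of the set of roots of `f` in
`(K*)ⁿ` under the componentwise order map equals the tropical hypersurface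
`𝒯(f)`. -/
theorem kapranov_orders (n : ℕ) (f : MvPolynomial (Fin n) K) (hf : f ≠ 0) :
    {r : Fin n → ℚ | ∃ x : Fin n → K, (∀ j, x j ≠ 0) ∧
        MvPolynomial.eval x f = 0 ∧ ∀ j, (x j).order = r j} = tropSet f := by
  ext r
  constructor
  · rintro ⟨x, hx, hroot, hord⟩
    exact Kapranov.mem_tropSet_of_eval_eq_zero hf
      (fun j => HahnSeries.orderTop_eq_coe_iff.mpr ⟨hx j, hord j⟩) hroot
  · intro hr
    obtain ⟨x, hx, hroot⟩ := Kapranov.exists_root_of_mem_tropSet hr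
    exact ⟨x, fun j => (HahnSeries.orderTop_eq_coe_iff.mp (hx j)).1, hroot,
      fun j => (HahnSeries.orderTop_eq_coe_iff.mp (hx j)).2⟩
end
end
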